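/- Conversely, if {P_n} is any sequence of F_q-linear polynomials of K-binomial type (P_i(st) = Σ (i choose n)_K P_n(t)(P_{i-n}(s))^{q^n}, deg P_i = q^i), then the operator δ_0 defined on the basis {P_n} by δ_0P_0 = 0, δ_0P_n = [n]P_{n-1}^q commutes with all multiplicative shifts ρ_λ, and δ = τ^{-1}δ_0 is a delta operator with basic sequence {P_n}. -/

import Mathlib

noncomputable section

/-- `[i] = x^{q^i} - x`. -/
def brk {K : Type*} [CommRing K] (q : ℕ) (x : K) (i : ℕ) : K := x ^ q ^ i - x

/-- Carlitz factorial: `D_0 = 1`, `D_i = [i] D_{i-1}^q`. -/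
def Dfac {K : Type*} [CommRing K] (q : ℕ) (x : K) : ℕ → K
  | 0 => 1
  | i + 1 => brk q x (i + 1) * (Dfac q x i) ^ q

/-- The `K`-binomial coefficient `(i choose n)_K = D_i / (D_n D_{i-n}^{q^n})`. -/
def kBinom {K : Type*} [Field K] (q : ℕ) (x : K) (i n : ℕ) : K :=
  Dfac q x i / (Dfac q x n * (Dfac q x (i - n)) ^ q ^ n)

/-- The Frobenius `τ` on `F_q`-linear polynomials `Σ a_k t^{q^k}` (encoded as `ℕ →₀ L`). -/
def frob {L : Type*} [CommRing L] (q : ℕ) (u : ℕ →₀ L) : ℕ →₀ L :=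
  u.sum fun k a => Finsupp.single (k + 1) (a ^ q)

/-- Evaluation of the `F_q`-linear polynomial `Σ a_k t^{q^k}` at a point `t`. -/
def evp {L : Type*} [CommRing L] (q : ℕ) (u : ℕ →₀ L) (t : L) : L :=
  u.sum fun k a => a * t ^ q ^ k

/-- The multiplicative shift `(ρ_λ u)(t) = u(λ t)`. -/
def rho {K L : Type*} [Field K] [Field L] [Algebra K L] (q : ℕ) (lam : K) (u : ℕ →₀ L) :
    ℕ →₀ L :=
  u.sum fun k a => Finsupp.single k ((algebraMap K L lam) ^ q ^ k * a)

/-! Setting `s = λ` in the binomial identity, and using that an `F_q`-linear polynomial vanishing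
on the infinite field `K` is zero, expresses `ρ_λ P_i` in the basis `{P_n}`. The Carlitz
recursion `[m+1] (j+1 choose m+1)_K = [j+1] (j choose m)_K^q` then matches `δ₀ ρ_λ P_i` and
`ρ_λ δ₀ P_i` term by term, and since the triangular family `{P_n}` spans, `δ₀` commutes with
every `ρ_λ`. Commuting with `ρ_x`, whose eigenvalues `x^{q^n}` on the monomials `t^{q^n}` are
pairwise distinct, forces `δ₀` to be diagonal on the monomials; the leading coefficient of
`δ₀ P_n = [n] P_{n-1}^q` then shows `c_0 = 0` and `c_n ≠ 0`. -/

open Finset Function Polynomial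

section FqLinear

variable {L : Type*} [CommRing L] (q : ℕ)

lemma frob_apply_zero (u : ℕ →₀ L) : frob q u 0 = 0 := by
  simp [frob, Finsupp.sum_apply]

lemma frob_apply_succ (hq : q ≠ 0) (u : ℕ →₀ L) (j : ℕ) : frob q u (j + 1) = u j ^ q := by
  classical
  rw [frob, Finsupp.sum_apply, Finsupp.sum_eq_single j]
  · simp
  · intro k _ hkj
    simp [hkj]
  · simp [zero_pow hq]

lemma frob_smul (hq : q ≠ 0) (c : L) (u : ℕ →₀ L) : frob q (c • u) = c ^ q • frob q u := by
  ext (_ | j) <;> simp [frob_apply_zero, frob_apply_succ q hq, mul_pow]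

lemma frob_sum (hq : q ≠ 0) (hadd : ∀ a b : L, (a + b) ^ q = a ^ q + b ^ q) {ι : Type*}
    (s : Finset ι) (f : ι → ℕ →₀ L) : frob q (∑ i ∈ s, f i) = ∑ i ∈ s, frob q (f i) := by
  ext (_ | j)
  · simp [frob_apply_zero]
  · simp only [frob_apply_succ q hq, Finsupp.finsetSum_apply]
    exact map_sum (AddMonoidHom.mk' (· ^ q) hadd) (fun i => f i j) s

lemma evp_eq_linearCombination (u : ℕ →₀ L) (t : L) :
    evp q u t = Finsupp.linearCombination L (fun k => t ^ q ^ k) u := by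
  simp [evp, Finsupp.linearCombination_apply]

end FqLinear

lemma eq_zero_of_evp_eq_zero {L : Type*} [CommRing L] [IsDomain L] {q : ℕ} (hq : 1 < q)
    {S : Set L} (hS : S.Infinite) {u : ℕ →₀ L} (h : ∀ t ∈ S, evp q u t = 0) : u = 0 := by
  classical
  set p : L[X] := ∑ k ∈ u.support, C (u k) * X ^ q ^ k
  have hp : p = 0 := by
    refine eq_zero_of_infinite_isRoot p (hS.mono fun t ht => ?_)
    simpa [p, IsRoot, eval_finsetSum, evp, Finsupp.sum] using h t ht
  ext j
  have hcoeff : p.coeff (q ^ j) = u j := by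
    simp [p, finsetSum_coeff, coeff_X_pow, (Nat.pow_right_injective hq).eq_iff, eq_comm]
  simpa [hp] using hcoeff.symm

section Shift

variable {K L : Type*} [Field K] [Field L] [Algebra K L] (q : ℕ)

lemma rho_apply (lam : K) (u : ℕ →₀ L) (j : ℕ) :
    rho q lam u j = algebraMap K L lam ^ q ^ j * u j := by
  classical
  rw [rho, Finsupp.sum_apply, Finsupp.sum_eq_single j]
  · simp
  · intro k _ hkj
    simp [hkj]
  · simp

def rhoLinearMap (lam : K) : (ℕ →₀ L) →ₗ[L] (ℕ →₀ L) where
  toFun := rho q lam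
  map_add' u v := by ext; simp [rho_apply, mul_add]
  map_smul' c u := by ext; simp [rho_apply, mul_left_comm]

@[simp]
lemma rhoLinearMap_apply (lam : K) (u : ℕ →₀ L) : rhoLinearMap q lam u = rho q lam u := rfl

lemma rho_smul (lam : K) (c : L) (u : ℕ →₀ L) : rho q lam (c • u) = c • rho q lam u :=
  map_smul (rhoLinearMap q lam) c u

lemma rho_single (lam : K) (n : ℕ) (a : L) :
    rho q lam (Finsupp.single n a) = (algebraMap K L lam ^ q ^ n * a) • Finsupp.single n 1 := by
  ext j
  by_cases h : j = n <;> simp [rho_apply, h]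

lemma rho_frob (hq : q ≠ 0) (lam : K) (u : ℕ →₀ L) :
    rho q lam (frob q u) = frob q (rho q lam u) := by
  ext (_ | j)
  · simp [rho_apply, frob_apply_zero]
  · simp [rho_apply, frob_apply_succ q hq, mul_pow, ← pow_mul, pow_succ]

lemma evp_rho (lam : K) (u : ℕ →₀ L) (t : L) :
    evp q (rho q lam u) t = evp q u (algebraMap K L lam * t) := by
  classical
  rw [evp, evp, rho, Finsupp.sum_sum_index (by simp) (by simp [add_mul])]
  refine Finsupp.sum_congr fun k _ => ?_
  rw [Finsupp.sum_single_index (by simp), mul_pow]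
  ring

end Shift

section Carlitz

variable {K : Type*} [Field K] (q : ℕ) {x : K}

lemma brk_ne_zero (hx : Injective fun n : ℕ => x ^ q ^ n) {n : ℕ} (hn : n ≠ 0) :
    brk q x n ≠ 0 :=
  sub_ne_zero.2 fun h => hn (hx (by simpa using h))

lemma Dfac_ne_zero (hx : Injective fun n : ℕ => x ^ q ^ n) (n : ℕ) : Dfac q x n ≠ 0 := by
  induction n with
  | zero => simp [Dfac]
  | succ n ih => exact mul_ne_zero (brk_ne_zero q hx n.succ_ne_zero) (pow_ne_zero _ ih)

lemma brk_mul_kBinom_succ (hx : Injective fun n : ℕ => x ^ q ^ n) {j m : ℕ} (hm : m ≤ j) :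
    brk q x (m + 1) * kBinom q x (j + 1) (m + 1) = brk q x (j + 1) * kBinom q x j m ^ q := by
  have hD := Dfac_ne_zero q hx
  rw [kBinom, kBinom, show j + 1 - (m + 1) = j - m by omega, Dfac, Dfac, div_pow, mul_pow,
    ← pow_mul, ← pow_succ]
  field_simp [hD m, hD j, hD (j - m), brk_ne_zero q hx m.succ_ne_zero]

end Carlitz

lemma span_range_eq_top_of_triangular {R : Type*} [DivisionRing R] {P : ℕ → ℕ →₀ R}
    (hP : ∀ n, P n n ≠ 0 ∧ ∀ k, n < k → P n k = 0) : Submodule.span R (Set.range P) = ⊤ := by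
  set S := Submodule.span R (Set.range P)
  have hsingle : ∀ n, Finsupp.single n (1 : R) ∈ S := by
    intro n
    induction n using Nat.strong_induction_on with
    | _ n ih =>
      have hlower : P n - P n n • Finsupp.single n 1 ∈ S := by
        have hsupp : P n - P n n • Finsupp.single n 1 ∈ Finsupp.supported R R (Set.Iio n) := by
          rw [Finsupp.mem_supported']
          intro k hk
          rcases (Set.notMem_Iio.1 hk).eq_or_lt with rfl | h
          · simp
          · simp [h.ne', (hP n).2 k h]
        rw [Finsupp.supported_eq_span_single] at hsupp
        exact Submodule.span_le.2 (Set.image_subset_iff.2 fun k hk => ih k hk) hsupp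
      have hlead := S.sub_mem (Submodule.subset_span ⟨n, rfl⟩) hlower
      rw [sub_sub_cancel] at hlead
      simpa [smul_smul, (hP n).1] using S.smul_mem (P n n)⁻¹ hlead
  rw [eq_top_iff, ← Finsupp.basisSingleOne.span_eq, Submodule.span_le]
  rintro _ ⟨n, rfl⟩
  simpa using hsingle n

lemma map_apply_eq_mul_of_map_single {α R : Type*} [CommSemiring R]
    (f : (α →₀ R) →ₗ[R] (α →₀ R)) {c : α → R}
    (hf : ∀ a, f (Finsupp.single a 1) = c a • Finsupp.single a 1) (u : α →₀ R) (a : α) :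
    f u a = c a * u a := by
  classical
  induction u using Finsupp.induction_linear with
  | zero => simp
  | add u v hu hv => simp [hu, hv, mul_add]
  | single b r =>
    rw [← mul_one r, ← smul_eq_mul, ← Finsupp.smul_single, map_smul, hf]
    by_cases h : b = a <;> simp [h, mul_comm]

lemma map_single_eq_smul_of_commute_rho {K L : Type*} [Field K] [Field L] [Algebra K L]
    {q : ℕ} (f : (ℕ →₀ L) →ₗ[L] (ℕ →₀ L)) {lam : K} (hlam : Injective fun n : ℕ => lam ^ q ^ n)
    (hf : ∀ u, f (rho q lam u) = rho q lam (f u)) (n : ℕ) :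
    f (Finsupp.single n 1) = f (Finsupp.single n 1) n • Finsupp.single n 1 := by
  ext j
  by_cases hj : j = n
  · subst hj; simp
  · have h := congrArg (· j) (hf (Finsupp.single n 1))
    simp only [rho_single, map_smul, Finsupp.smul_apply, smul_eq_mul, mul_one, rho_apply] at h
    simp only [Finsupp.smul_apply, Finsupp.single_apply, if_neg (Ne.symm hj), smul_zero]
    by_contra hne
    refine hj (hlam ((algebraMap K L).injective ?_))
    simpa using (mul_right_cancel₀ hne h).symm

section BinomialType

variable {K L : Type*} [Field K] [Field L] [Algebra K L]

def IsKBinomialType (q : ℕ) (x : K) (P : ℕ → ℕ →₀ L) : Prop :=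
  ∀ (i : ℕ) (s t : K), evp q (P i) (algebraMap K L (s * t))
    = ∑ n ∈ range (i + 1), algebraMap K L (kBinom q x i n) * evp q (P n) (algebraMap K L t)
        * evp q (P (i - n)) (algebraMap K L s) ^ q ^ n

lemma IsKBinomialType.rho_eq_sum [Infinite K] {q : ℕ} {x : K} {P : ℕ → ℕ →₀ L} (hq : 1 < q)
    (hP : IsKBinomialType q x P) (lam : K) (i : ℕ) :
    rho q lam (P i) = ∑ n ∈ range (i + 1),
      (algebraMap K L (kBinom q x i n) * evp q (P (i - n)) (algebraMap K L lam) ^ q ^ n)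
        • P n := by
  rw [← sub_eq_zero]
  refine eq_zero_of_evp_eq_zero hq
    (Set.infinite_range_of_injective (algebraMap K L).injective) ?_
  rintro _ ⟨s, rfl⟩
  have h := hP i lam s
  rw [map_mul, ← evp_rho] at h
  simp only [evp_eq_linearCombination, map_sub, map_sum, map_smul, smul_eq_mul] at h ⊢
  rw [h, sub_eq_zero]
  exact sum_congr rfl fun n _ => by ring

end BinomialType

section DeltaOperator

variable {K L : Type*} [Field K] [Field L] [Algebra K L] {q : ℕ} {x : K} {P : ℕ → ℕ →₀ L}
  {δ₀ : (ℕ →₀ L) →ₗ[L] (ℕ →₀ L)}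

lemma IsKBinomialType.commute_rho_basis (hq : 1 < q)
    (hadd : ∀ a b : L, (a + b) ^ q = a ^ q + b ^ q)
    (hx : Injective fun n : ℕ => x ^ q ^ n)
    (hP : IsKBinomialType q x P) (hδ₀P0 : δ₀ (P 0) = 0)
    (hδ₀P : ∀ n, 1 ≤ n → δ₀ (P n) = algebraMap K L (brk q x n) • frob q (P (n - 1)))
    (lam : K) (i : ℕ) : δ₀ (rho q lam (P i)) = rho q lam (δ₀ (P i)) := by
  have : Infinite K := Infinite.of_injective _ hx
  have hq0 : q ≠ 0 := by omega
  cases i with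
  | zero => simp [hP.rho_eq_sum hq, hδ₀P0, ← rhoLinearMap_apply]
  | succ j =>
    rw [hP.rho_eq_sum hq, map_sum, sum_range_succ', hδ₀P (j + 1) (by omega), Nat.add_sub_cancel,
      rho_smul, rho_frob q hq0, hP.rho_eq_sum hq, frob_sum q hq0 hadd, smul_sum]
    simp only [map_smul, hδ₀P0, smul_zero, add_zero]
    refine sum_congr rfl fun m hm => ?_
    rw [hδ₀P (m + 1) (by omega), Nat.add_sub_cancel, Nat.add_sub_add_right, frob_smul q hq0,
      smul_smul, smul_smul]
    congr 1
    have key := congrArg (algebraMap K L)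
      (brk_mul_kBinom_succ q hx (Nat.lt_succ_iff.1 (mem_range.1 hm)))
    simp only [map_mul, map_pow] at key
    rw [mul_pow, ← pow_mul, ← pow_succ]
    linear_combination evp q (P (j - m)) (algebraMap K L lam) ^ q ^ (m + 1) * key

theorem IsKBinomialType.commute_rho (hq : 1 < q)
    (hadd : ∀ a b : L, (a + b) ^ q = a ^ q + b ^ q)
    (hx : Injective fun n : ℕ => x ^ q ^ n)
    (hPdeg : ∀ n, P n n ≠ 0 ∧ ∀ k, n < k → P n k = 0) (hP : IsKBinomialType q x P)
    (hδ₀P0 : δ₀ (P 0) = 0)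
    (hδ₀P : ∀ n, 1 ≤ n → δ₀ (P n) = algebraMap K L (brk q x n) • frob q (P (n - 1)))
    (lam : K) (u : ℕ →₀ L) : δ₀ (rho q lam u) = rho q lam (δ₀ u) :=
  LinearMap.congr_fun (LinearMap.ext_on_range (f := δ₀ ∘ₗ rhoLinearMap q lam)
    (g := rhoLinearMap q lam ∘ₗ δ₀) (span_range_eq_top_of_triangular hPdeg)
    (hP.commute_rho_basis hq hadd hx hδ₀P0 hδ₀P lam)) u

theorem exists_eigenvalues_of_commute_rho (hq : q ≠ 0)
    (hx : Injective fun n : ℕ => x ^ q ^ n)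
    (hPdeg : ∀ n, P n n ≠ 0 ∧ ∀ k, n < k → P n k = 0) (hδ₀P0 : δ₀ (P 0) = 0)
    (hδ₀P : ∀ n, 1 ≤ n → δ₀ (P n) = algebraMap K L (brk q x n) • frob q (P (n - 1)))
    (hcomm : ∀ u, δ₀ (rho q x u) = rho q x (δ₀ u)) :
    ∃ c : ℕ → L, c 0 = 0 ∧ (∀ n, 1 ≤ n → c n ≠ 0)
      ∧ ∀ n, δ₀ (Finsupp.single n 1) = c n • Finsupp.single n 1 := by
  set c : ℕ → L := fun n => δ₀ (Finsupp.single n 1) n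
  have heig : ∀ n, δ₀ (Finsupp.single n 1) = c n • Finsupp.single n 1 :=
    map_single_eq_smul_of_commute_rho δ₀ hx hcomm
  have hdiag := map_apply_eq_mul_of_map_single δ₀ heig
  refine ⟨c, ?_, fun n hn => ?_, heig⟩
  · simpa [hδ₀P0, (hPdeg 0).1] using hdiag (P 0) 0
  · obtain ⟨m, rfl⟩ := Nat.exists_eq_add_of_le' hn
    have h := hdiag (P (m + 1)) (m + 1)
    rw [hδ₀P _ hn, Finsupp.smul_apply, Nat.add_sub_cancel, frob_apply_succ q hq,
      smul_eq_mul] at h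
    intro hc
    rw [hc, zero_mul] at h
    exact mul_ne_zero ((_root_.map_ne_zero _).2 (brk_ne_zero q hx m.succ_ne_zero))
      (pow_ne_zero _ (hPdeg m).1) h

end DeltaOperator

lemma add_pow_card {F R : Type*} [Field F] [Fintype F] [CommRing R] [Nontrivial R]
    (φ : F →+* R) (a b : R) :
    (a + b) ^ Fintype.card F = a ^ Fintype.card F + b ^ Fintype.card F := by
  obtain ⟨n, hp, hcard⟩ := FiniteField.card F (ringChar F)
  have : Fact (ringChar F).Prime := ⟨hp⟩
  have : CharP R (ringChar F) := charP_of_injective_ringHom φ.injective _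
  rw [hcard]
  exact add_pow_char_pow ..

lemma injective_single_one_pow_pow (F : Type*) [Field F] {q : ℕ} (hq : 1 < q) :
    Injective fun n : ℕ =>
      (HahnSeries.single (1 : ℤ) (1 : F) : LaurentSeries F) ^ q ^ n := by
  intro a b h
  have hcoeff := congrArg (fun s : LaurentSeries F => s.coeff ((q ^ a : ℕ) : ℤ)) h
  simp only [HahnSeries.single_pow, one_pow, nsmul_eq_mul, mul_one, HahnSeries.coeff_single,
    if_true, Nat.cast_inj] at hcoeff
  exact Nat.pow_right_injective hq
    (by_contra fun hne => one_ne_zero (hcoeff.trans (if_neg hne)))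

/-- Converse part of Theorem 1: if `{P_n}` is a sequence of `F_q`-linear polynomials of
`K`-binomial type (with `deg P_i = q^i`) and `δ₀` is the linear operator defined on the basis
`{P_n}` by `δ₀P_0 = 0`, `δ₀P_n = [n]P_{n-1}^q`, then `δ₀` commutes with all multiplicative
shifts `ρ_λ`, and `δ = τ^{-1}δ₀` is a delta operator (i.e. `δ₀(t^{q^n}) = c_n t^{q^n}` with
`c_0 = 0` and `c_n ≠ 0` for `n ≥ 1`) whose basic sequence is `{P_n}`. -/
theorem K_binomial_gives_delta_operator {F L : Type*} [Field F] [Fintype F] [Field L]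
    [Algebra (LaurentSeries F) L]
    (q : ℕ) (hq : q = Fintype.card F)
    (P : ℕ → (ℕ →₀ L))
    (hPdeg : ∀ n : ℕ, P n n ≠ 0 ∧ ∀ k, n < k → P n k = 0)
    (hbinom : ∀ (i : ℕ) (s t : LaurentSeries F),
      evp q (P i) (algebraMap (LaurentSeries F) L (s * t))
        = ∑ n ∈ Finset.range (i + 1),
            algebraMap (LaurentSeries F) L
                (kBinom q (HahnSeries.single (1 : ℤ) (1 : F)) i n)
              * evp q (P n) (algebraMap (LaurentSeries F) L t)
              * (evp q (P (i - n)) (algebraMap (LaurentSeries F) L s)) ^ q ^ n)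
    (δ₀ : (ℕ →₀ L) →ₗ[L] (ℕ →₀ L))
    (hδ₀P0 : δ₀ (P 0) = 0)
    (hδ₀P : ∀ n, 1 ≤ n →
      δ₀ (P n)
        = algebraMap (LaurentSeries F) L
            (brk q (HahnSeries.single (1 : ℤ) (1 : F)) n) • frob q (P (n - 1))) :
    (∀ (lam : LaurentSeries F) (u : ℕ →₀ L), δ₀ (rho q lam u) = rho q lam (δ₀ u))
    ∧ ∃ c : ℕ → L, c 0 = 0 ∧ (∀ n, 1 ≤ n → c n ≠ 0)
        ∧ ∀ n : ℕ, δ₀ (Finsupp.single n 1) = c n • Finsupp.single n 1 := by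
  have hq1 : 1 < q := hq ▸ Fintype.one_lt_card
  have hadd : ∀ a b : L, (a + b) ^ q = a ^ q + b ^ q :=
    hq ▸ add_pow_card ((algebraMap (LaurentSeries F) L).comp HahnSeries.C)
  have hx := injective_single_one_pow_pow F hq1
  have hcomm := IsKBinomialType.commute_rho hq1 hadd hx hPdeg hbinom hδ₀P0 hδ₀P
  exact ⟨hcomm, exists_eigenvalues_of_commute_rho (by omega) hx hPdeg hδ₀P0 hδ₀P (hcomm _)⟩
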